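/- arXiv:1305.6593 — 3 statements merged into one kernel-verified Lean document; each statement's English description precedes it below -/
import Mathlib

section
/- Let λ ∈ ℝⁿ, let A = diag(λ) be the corresponding real diagonal matrix viewed as an n×n Hermitian matrix, and let 𝒪 = {uAu* : u ∈ U(n)} be its conjugacy class under unitary conjugation inside the Hermitian matrices. Then the image δ(𝒪) = {(X₁₁, …, Xₙₙ) : X ∈ 𝒪} ⊂ ℝⁿ of 𝒪 under the map taking a Hermitian matrix to its (real) diagonal vector equals the convex hull of the finite set {(λ_{σ(1)}, …, λ_{σ(n)}) : σ ∈ Sym_n} of all permutations of the coordinates of λ; in particular δ(𝒪) is a convex polytope. -/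
/-!
The diagonal of `w diag(λ) w*` is `M λ` for the doubly stochastic matrix `M i a = |w i a|²`, so by
Birkhoff's theorem it lies in the convex hull of the permutations of `λ`. Conversely, once `λ` and
a point `v` of the hull are sorted increasingly, the prefix sums of `λ` are at most those of `v`
(with equal totals), and then `v` is reached from `λ` by finitely many T-transforms, each moving
mass between two coordinates without leaving the interval they span. The diagonal of a Hermitian
matrix undergoes any given T-transform under conjugation by a rotation in the plane of the two
coordinates, whose angle is found by the intermediate value theorem.
-/

open Matrix Finset

def IsTTransform {ι : Type*} (d v : ι → ℝ) : Prop :=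
  ∃ j k, j ≠ k ∧ v j ∈ Set.uIcc (d j) (d k) ∧ v j + v k = d j + d k ∧
    ∀ i, i ≠ j → i ≠ k → v i = d i

section TTransform

variable {ι : Type*}

theorem isTTransform_comp_swap [DecidableEq ι] (d : ι → ℝ) {j k : ι} (hjk : j ≠ k) :
    IsTTransform d (d ∘ Equiv.swap j k) :=
  ⟨j, k, hjk, by simp, by simp [add_comm], fun i hij hik => by
    simp [Equiv.swap_apply_of_ne_of_ne hij hik]⟩

theorem reflTransGen_isTTransform_comp_perm [DecidableEq ι] [Finite ι] (d : ι → ℝ)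
    (σ : Equiv.Perm ι) : Relation.ReflTransGen IsTTransform d (d ∘ σ) := by
  induction σ using Equiv.Perm.swap_induction_on generalizing d with
  | one => exact .refl
  | swap_mul σ j k hjk ih =>
    exact .head (isTTransform_comp_swap d hjk) (ih (d ∘ Equiv.swap j k))

variable [Fintype ι] [LinearOrder ι] [LocallyFiniteOrderBot ι] {d v : ι → ℝ}

theorem exists_transfer_indices (hle : ∀ i, ∑ l ∈ Iic i, d l ≤ ∑ l ∈ Iic i, v l)
    (hsum : ∑ i, d i = ∑ i, v i) (hne : d ≠ v) :
    ∃ j k, j < k ∧ d j < v j ∧ v k < d k ∧ (∀ l < j, d l = v l) ∧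
      ∀ l, j < l → l < k → d l ≤ v l := by
  have hD : ({i | d i ≠ v i} : Finset ι).Nonempty := by
    obtain ⟨i, hi⟩ := Function.ne_iff.1 hne
    exact ⟨i, by simpa using hi⟩
  set j := ({i | d i ≠ v i} : Finset ι).min' hD
  have hbelow : ∀ l < j, d l = v l := fun l hl =>
    by_contra fun h => (min'_le _ l (by simpa using h)).not_gt hl
  have hj : d j < v j := by
    have hjne : d j ≠ v j := by simpa using min'_mem _ hD
    have h := hle j
    rw [← Iio_insert, sum_insert notMem_Iio_self, sum_insert notMem_Iio_self,
      sum_congr rfl fun l hl => hbelow l (mem_Iio.1 hl)] at h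
    exact lt_of_le_of_ne (by linarith) hjne
  have hK : ({l | j < l ∧ v l < d l} : Finset ι).Nonempty := by
    by_contra hK
    have hdv : ∀ l, d l ≤ v l := fun l => by
      rcases lt_trichotomy l j with h | rfl | h
      · exact (hbelow l h).le
      · exact hj.le
      · exact not_lt.1 fun h' => hK ⟨l, by simp [h, h']⟩
    exact (sum_lt_sum (fun l _ => hdv l) ⟨j, mem_univ _, hj⟩).ne hsum
  set k := ({l | j < l ∧ v l < d l} : Finset ι).min' hK
  obtain ⟨hjk, hk⟩ : j < k ∧ v k < d k := (mem_filter.1 (min'_mem _ hK)).2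
  exact ⟨j, k, hjk, hj, hk, hbelow, fun l hjl hlk =>
    not_lt.1 fun h => (min'_le _ l (by simp [hjl, h])).not_gt hlk⟩

theorem exists_isTTransform_of_sum_Iic_le (hv : Monotone v)
    (hle : ∀ i, ∑ l ∈ Iic i, d l ≤ ∑ l ∈ Iic i, v l) (hsum : ∑ i, d i = ∑ i, v i) (hne : d ≠ v) :
    ∃ d', IsTTransform d d' ∧ (∀ i, ∑ l ∈ Iic i, d' l ≤ ∑ l ∈ Iic i, v l) ∧
      ∑ i, d' i = ∑ i, v i ∧ #{i | d' i ≠ v i} < #{i | d i ≠ v i} := by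
  obtain ⟨j, k, hjk, hj, hk, hbelow, hbetween⟩ := exists_transfer_indices hle hsum hne
  set d' := d + Pi.single j (v j - d j) - Pi.single k (v j - d j)
  have hd'j : d' j = v j := by simp [d', hjk.ne']
  have hd'k : d' k = d k - (v j - d j) := by simp [d', hjk.ne']
  have hd' : ∀ l, l ≠ j → l ≠ k → d' l = d l := fun l hlj hlk => by simp [d', hlj, hlk]
  have hsum' : ∀ s, j ∈ s → k ∈ s → ∑ l ∈ s, d' l = ∑ l ∈ s, d l := fun s hjs hks => by
    simp [d', sum_add_distrib, sum_sub_distrib, hjs, hks]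
  refine ⟨d', ⟨j, k, hjk.ne, ?_, by rw [hd'j, hd'k]; ring, hd'⟩, fun i => ?_, ?_, ?_⟩
  · rw [hd'j]
    exact Set.mem_uIcc_of_le hj.le ((hv hjk.le).trans hk.le)
  · rcases lt_or_ge i k with hik | hki
    · refine sum_le_sum fun l hl => ?_
      have hlk : l < k := (mem_Iic.1 hl).trans_lt hik
      rcases lt_trichotomy l j with hlj | rfl | hjl
      · rw [hd' l hlj.ne hlk.ne, hbelow l hlj]
      · exact hd'j.le
      · rw [hd' l hjl.ne' hlk.ne]
        exact hbetween l hjl hlk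
    · rw [hsum' _ (mem_Iic.2 (hjk.le.trans hki)) (mem_Iic.2 hki)]
      exact hle i
  · rw [hsum' univ (mem_univ j) (mem_univ k)]
    exact hsum
  · refine card_lt_card ⟨fun l => ?_, fun h => by simpa [hd'j, hj.ne] using h (x := j)⟩
    rcases eq_or_ne l j with rfl | hlj
    · simp [hd'j]
    rcases eq_or_ne l k with rfl | hlk
    · simp [hk.ne']
    · simp [hd' l hlj hlk]

theorem reflTransGen_isTTransform_of_sum_Iic_le (hv : Monotone v) {d : ι → ℝ}
    (hle : ∀ i, ∑ l ∈ Iic i, d l ≤ ∑ l ∈ Iic i, v l) (hsum : ∑ i, d i = ∑ i, v i) :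
    Relation.ReflTransGen IsTTransform d v := by
  by_cases hne : d = v
  · exact hne ▸ .refl
  obtain ⟨d', hstep, hle', hsum', hlt⟩ := exists_isTTransform_of_sum_Iic_le hv hle hsum hne
  exact .head hstep (reflTransGen_isTTransform_of_sum_Iic_le hv hle' hsum')
termination_by #{i | d i ≠ v i}

end TTransform

section DoublyStochastic

variable {ι : Type*} [Fintype ι]

theorem sum_Iic_le_sum_mul_of_monotone [LinearOrder ι] [LocallyFiniteOrderBot ι] {x c : ι → ℝ}
    (hx : Monotone x) (hc₀ : ∀ a, 0 ≤ c a) (hc₁ : ∀ a, c a ≤ 1) {i : ι}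
    (hc : ∑ a, c a = #(Iic i)) : ∑ l ∈ Iic i, x l ≤ ∑ a, c a * x a := by
  have hind : ∀ f : ι → ℝ, ∑ l ∈ Iic i, f l = ∑ a, (if a ≤ i then 1 else 0) * f a := fun f => by
    simp [ite_mul, ← sum_filter, filter_ge_eq_Iic]
  have key : ∑ a, c a * x a - ∑ l ∈ Iic i, x l =
      ∑ a, (c a - if a ≤ i then 1 else 0) * (x a - x i) := by
    have hcard := hind fun _ => 1
    simp only [sum_const, nsmul_eq_mul, mul_one] at hcard
    simp only [sub_mul, mul_sub, sum_sub_distrib, ← sum_mul, hc, hcard, hind x]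
    ring
  have hnonneg : 0 ≤ ∑ a, (c a - if a ≤ i then 1 else 0) * (x a - x i) := by
    refine sum_nonneg fun a _ => ?_
    split_ifs with ha
    · exact mul_nonneg_of_nonpos_of_nonpos (sub_nonpos.2 (hc₁ a)) (sub_nonpos.2 (hx ha))
    · exact mul_nonneg (by simpa using hc₀ a) (sub_nonneg.2 (hx (not_le.1 ha).le))
  linarith

theorem sum_Iic_le_sum_Iic_mulVec [LinearOrder ι] [LocallyFiniteOrderBot ι] {x : ι → ℝ}
    (hx : Monotone x) {M : Matrix ι ι ℝ} (hM : M ∈ doublyStochastic ℝ ι) (i : ι) :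
    ∑ l ∈ Iic i, x l ≤ ∑ l ∈ Iic i, (M *ᵥ x) l := by
  have h : ∑ l ∈ Iic i, (M *ᵥ x) l = ∑ a, (∑ l ∈ Iic i, M l a) * x a := by
    simp only [mulVec, dotProduct, sum_mul]
    exact sum_comm
  rw [h]
  refine sum_Iic_le_sum_mul_of_monotone hx
    (fun a => sum_nonneg fun l _ => nonneg_of_mem_doublyStochastic hM) (fun a => ?_) ?_
  · calc ∑ l ∈ Iic i, M l a ≤ ∑ l, M l a :=
          sum_le_sum_of_subset_of_nonneg (subset_univ _)
            fun _ _ _ => nonneg_of_mem_doublyStochastic hM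
      _ = 1 := sum_col_of_mem_doublyStochastic hM a
  · rw [sum_comm]
    simp [sum_row_of_mem_doublyStochastic hM]

theorem convexHull_range_comp_perm [DecidableEq ι] (x : ι → ℝ) :
    convexHull ℝ (Set.range fun σ : Equiv.Perm ι => x ∘ σ) =
      (· *ᵥ x) '' (doublyStochastic ℝ ι : Set (Matrix ι ι ℝ)) := by
  have hlin : IsLinearMap ℝ fun M : Matrix ι ι ℝ => M *ᵥ x :=
    ⟨fun M N => add_mulVec M N x, fun c M => smul_mulVec c M x⟩
  rw [doublyStochastic_eq_convexHull_permMatrix, hlin.image_convexHull]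
  congr 1
  ext y
  simp [permMatrix_mulVec]

end DoublyStochastic

theorem reflTransGen_isTTransform_of_mem_convexHull {n : ℕ} {lam v : Fin n → ℝ}
    (hv : v ∈ convexHull ℝ (Set.range fun σ : Equiv.Perm (Fin n) => lam ∘ σ)) :
    Relation.ReflTransGen IsTTransform lam v := by
  rw [convexHull_range_comp_perm] at hv
  obtain ⟨M, hM, rfl⟩ := hv
  set τ := Tuple.sort lam
  set π := Tuple.sort (M *ᵥ lam)
  set M' := π.permMatrix ℝ * M * τ⁻¹.permMatrix ℝ
  have hM' : M' ∈ doublyStochastic ℝ (Fin n) :=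
    mul_mem (mul_mem permMatrix_mem_doublyStochastic hM) permMatrix_mem_doublyStochastic
  have hsorted : M' *ᵥ (lam ∘ τ) = (M *ᵥ lam) ∘ π := by
    simp [M', ← mulVec_mulVec, permMatrix_mulVec, Function.comp_assoc]
  have hmaj : Relation.ReflTransGen IsTTransform (lam ∘ τ) ((M *ᵥ lam) ∘ π) := by
    rw [← hsorted]
    exact reflTransGen_isTTransform_of_sum_Iic_le (hsorted ▸ Tuple.monotone_sort _)
      (sum_Iic_le_sum_Iic_mulVec (Tuple.monotone_sort lam) hM')
      (sum_mulVec_of_mem_doublyStochastic hM').symm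
  have hback := reflTransGen_isTTransform_comp_perm ((M *ᵥ lam) ∘ π) π⁻¹
  rw [Function.comp_assoc, ← Equiv.Perm.coe_mul, mul_inv_cancel, Equiv.Perm.coe_one,
    Function.comp_id] at hback
  exact ((reflTransGen_isTTransform_comp_perm lam τ).trans hmaj).trans hback

section Unitary

variable {ι : Type*} [Fintype ι] [DecidableEq ι]

theorem sum_normSq_of_mem_unitaryGroup {w : Matrix ι ι ℂ} (hw : w ∈ unitaryGroup ι ℂ) (i : ι) :
    ∑ a, Complex.normSq (w i a) = 1 := by
  have h := congr_fun₂ (mem_unitaryGroup_iff.1 hw) i i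
  simp only [mul_apply, star_apply, Complex.star_def, Complex.mul_conj, one_apply_eq] at h
  exact_mod_cast h

theorem of_normSq_mem_doublyStochastic {w : Matrix ι ι ℂ} (hw : w ∈ unitaryGroup ι ℂ) :
    (of fun i a => Complex.normSq (w i a)) ∈ doublyStochastic ℝ ι := by
  refine mem_doublyStochastic_iff_sum.2
    ⟨fun _ _ => Complex.normSq_nonneg _, sum_normSq_of_mem_unitaryGroup hw, fun a => ?_⟩
  simpa using sum_normSq_of_mem_unitaryGroup (Unitary.star_mem hw) a

theorem mul_diagonal_mul_star_apply_self (w : Matrix ι ι ℂ) (x : ι → ℝ) (i : ι) :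
    (w * diagonal (fun a => (x a : ℂ)) * star w) i i =
      (((of fun i a => Complex.normSq (w i a)) *ᵥ x) i : ℝ) := by
  rw [mul_apply]
  simp only [mul_diagonal, star_apply, mulVec, dotProduct, of_apply]
  push_cast
  refine sum_congr rfl fun a _ => ?_
  rw [← Complex.mul_conj, Complex.star_def]
  ring

end Unitary

section PlaneRotation

variable {ι : Type*} [Fintype ι] [DecidableEq ι]

noncomputable def planeRotation (j k : ι) (c s : ℝ) : Matrix ι ι ℂ :=
  Matrix.of fun a =>
    if a = j then Pi.single j (c : ℂ) + Pi.single k (s : ℂ)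
    else if a = k then Pi.single j (-s : ℂ) + Pi.single k (c : ℂ)
    else Pi.single a 1

variable {j k : ι} {c s : ℝ}

theorem planeRotation_mem_unitaryGroup (hjk : j ≠ k) (hcs : c ^ 2 + s ^ 2 = 1) :
    planeRotation j k c s ∈ unitaryGroup ι ℂ := by
  rw [mem_unitaryGroup_iff]
  have hC : (c : ℂ) ^ 2 + (s : ℂ) ^ 2 = 1 := by exact_mod_cast hcs
  have hkj := hjk.symm
  ext a b
  by_cases haj : a = j <;> by_cases hak : a = k <;> by_cases hbj : b = j <;>
    by_cases hbk : b = k <;>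
    simp_all [planeRotation, mul_apply, Pi.single_apply, one_apply, mul_add, sum_add_distrib,
      apply_ite (starRingEnd ℂ), mul_ite, eq_comm (b := a)] <;>
    grind

theorem planeRotation_conj_apply_left (X : Matrix ι ι ℂ) :
    (planeRotation j k c s * X * star (planeRotation j k c s)) j j =
      c ^ 2 * X j j + s ^ 2 * X k k + c * s * (X j k + X k j) := by
  simp [planeRotation, mul_apply, Pi.single_apply, add_mul, mul_add, sum_add_distrib,
    apply_ite (starRingEnd ℂ), mul_ite]
  ring

theorem planeRotation_conj_apply_right (hjk : j ≠ k) (X : Matrix ι ι ℂ) :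
    (planeRotation j k c s * X * star (planeRotation j k c s)) k k =
      s ^ 2 * X j j + c ^ 2 * X k k - c * s * (X j k + X k j) := by
  simp [planeRotation, mul_apply, Pi.single_apply, hjk.symm, add_mul, mul_add, sum_add_distrib,
    apply_ite (starRingEnd ℂ), mul_ite]
  ring

theorem planeRotation_conj_apply_of_ne {i : ι} (hij : i ≠ j) (hik : i ≠ k) (X : Matrix ι ι ℂ) :
    (planeRotation j k c s * X * star (planeRotation j k c s)) i i = X i i := by
  simp [planeRotation, mul_apply, Pi.single_apply, hij, hik]

end PlaneRotation

section Realization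

variable {ι : Type*} [Fintype ι] [DecidableEq ι]

open Real in
theorem IsTTransform.exists_unitary_conj {X : Matrix ι ι ℂ} (hX : X.IsHermitian) {d v : ι → ℝ}
    (hd : ∀ i, (d i : ℂ) = X i i) (h : IsTTransform d v) :
    ∃ R ∈ unitaryGroup ι ℂ, ∀ i, (v i : ℂ) = (R * X * star R) i i := by
  obtain ⟨j, k, hjk, hmem, hsum, hrest⟩ := h
  have hoff : X j k + X k j = 2 * (X j k).re := by
    rw [← hX.apply k j, Complex.star_def, Complex.add_conj]; push_cast; ring
  -- `f θ` is the new `j`-th diagonal entry after rotating by `θ`; it runs from `d j` to `d k`.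
  let f : ℝ → ℝ := fun θ => cos θ ^ 2 * d j + sin θ ^ 2 * d k + 2 * cos θ * sin θ * (X j k).re
  obtain ⟨θ, -, hθ⟩ : ∃ θ ∈ Set.uIcc 0 (π / 2), f θ = v j :=
    intermediate_value_uIcc (by fun_prop) (by simpa [f] using hmem)
  refine ⟨planeRotation j k (cos θ) (sin θ),
    planeRotation_mem_unitaryGroup hjk (cos_sq_add_sin_sq θ), fun i => ?_⟩
  rcases eq_or_ne i j with rfl | hij
  · rw [planeRotation_conj_apply_left, ← hd, ← hd, hoff, ← hθ]
    simp only [f]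
    push_cast
    ring
  rcases eq_or_ne i k with rfl | hik
  · rw [planeRotation_conj_apply_right hjk, ← hd, ← hd, hoff,
      show v i = d j + d i - f θ by linarith]
    simp only [f]
    push_cast
    linear_combination (-(d j : ℂ) - d i) * Complex.cos_sq_add_sin_sq (θ : ℂ)
  · rw [planeRotation_conj_apply_of_ne hij hik, hrest i hij hik, hd]

theorem exists_unitary_conj_of_reflTransGen {X : Matrix ι ι ℂ} (hX : X.IsHermitian)
    {d v : ι → ℝ} (hd : ∀ i, (d i : ℂ) = X i i) (h : Relation.ReflTransGen IsTTransform d v) :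
    ∃ w ∈ unitaryGroup ι ℂ, ∀ i, (v i : ℂ) = (w * X * star w) i i := by
  induction h with
  | refl => exact ⟨1, one_mem _, by simpa using hd⟩
  | tail _ hstep ih =>
    obtain ⟨w, hw, hwd⟩ := ih
    have hY : (w * X * star w).IsHermitian := isHermitian_mul_mul_conjTranspose w hX
    obtain ⟨R, hR, hRd⟩ := hstep.exists_unitary_conj hY hwd
    exact ⟨R * w, mul_mem hR hw, by simpa [Matrix.mul_assoc, star_mul] using hRd⟩

end Realization

/-- **Horn's linear convexity theorem**: the set of diagonal vectors of the unitary
conjugation orbit of the real diagonal matrix `diag(λ)` (inside the Hermitian matrices)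
is the convex hull of the set of all coordinate permutations of `λ`. -/
theorem horn_convexity (n : ℕ) (lam : Fin n → ℝ) :
    {v : Fin n → ℝ |
      ∃ w ∈ Matrix.unitaryGroup (Fin n) ℂ,
        ∀ i, (v i : ℂ) =
          (w * Matrix.diagonal (fun j => (lam j : ℂ)) * star w) i i}
    = convexHull ℝ (Set.range fun σ : Equiv.Perm (Fin n) => lam ∘ σ) := by
  ext v
  constructor
  · rintro ⟨w, hw, hv⟩
    rw [convexHull_range_comp_perm]
    refine ⟨_, of_normSq_mem_doublyStochastic hw, funext fun i => ?_⟩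
    exact_mod_cast ((hv i).trans (mul_diagonal_mul_star_apply_self w lam i)).symm
  · intro hv
    have hD : (diagonal fun j => (lam j : ℂ)).IsHermitian :=
      isHermitian_diagonal_of_self_adjoint _ (funext fun j => Complex.conj_ofReal _)
    exact exists_unitary_conj_of_reflTransGen hD (fun i => by simp)
      (reflTransGen_isTTransform_of_mem_convexHull hv)
end

section
/- Let n ≥ 1 and let 𝒜 = Σ_{k≥0} 𝒜_k z^k be a formal power series with coefficients 𝒜_k ∈ M_n(ℂ) whose constant term 𝒜₀ is a diagonal matrix with pairwise distinct diagonal entries. Then there exists a unique pair (Λ, F) with Λ ∈ M_n(ℂ) diagonal and F = Σ_{k≥0} F_k z^k a formal matrix power series with constant term F₀ = 1 (the identity matrix), such that z²·(dF/dz) = 𝒜·F − F·(𝒜₀ + Λz) holds in M_n(ℂ)⟦z⟧; equivalently, for every k ≥ 0 one has (k−1)·F_{k−1} = (Σ_{m=0}^{k} 𝒜_m·F_{k−m}) − F_k·𝒜₀ − F_{k−1}·Λ, with the convention F_{−1} = 0. Moreover the exponent of formal monodromy Λ equals the diagonal part of the coefficient 𝒜₁. -/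
open Matrix Finset

noncomputable def stepO (n : ℕ) (A : ℕ → Matrix (Fin n) (Fin n) ℂ)
    (F : ℕ → Matrix (Fin n) (Fin n) ℂ) (k : ℕ) : Matrix (Fin n) (Fin n) ℂ :=
  Matrix.of fun i j => if i = j then 0 else
    (((k : ℂ) • F k + F k * Matrix.diagonal (fun r => A 1 r r)
      - ∑ m ∈ Finset.range (k+1), A (m+1) * F (k - m)) i j) / (A 0 i i - A 0 j j)

noncomputable def stepD (n : ℕ) (A : ℕ → Matrix (Fin n) (Fin n) ℂ)
    (F : ℕ → Matrix (Fin n) (Fin n) ℂ) (k : ℕ) : Matrix (Fin n) (Fin n) ℂ :=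
  Matrix.diagonal fun i =>
    ((A 1 * stepO n A F k) i i + ∑ m ∈ Finset.range (k+1), (A (m+2) * F (k - m)) i i)
      / ((k : ℂ) + 1)

noncomputable def Fm (n : ℕ) (A : ℕ → Matrix (Fin n) (Fin n) ℂ) : ℕ → Matrix (Fin n) (Fin n) ℂ
  | 0 => 1
  | (k+1) => stepO n A (fun j => Fm n A (min j k)) k + stepD n A (fun j => Fm n A (min j k)) k
termination_by k => k
decreasing_by all_goals exact Nat.lt_succ_of_le (min_le_right _ _)

lemma stepO_congr (n A F G k) (h : ∀ j ≤ k, F j = G j) : stepO n A F k = stepO n A G k := by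
  unfold stepO
  ext i j
  simp only [Matrix.of_apply]
  rw [h k le_rfl, Finset.sum_congr rfl fun m _ => by rw [h (k - m) (Nat.sub_le _ _)]]

lemma stepD_congr (n A F G k) (h : ∀ j ≤ k, F j = G j) : stepD n A F k = stepD n A G k := by
  unfold stepD
  rw [stepO_congr n A F G k h]
  refine congrArg Matrix.diagonal (funext fun i => ?_)
  have hs : (∑ m ∈ Finset.range (k+1), (A (m+2) * F (k - m)) i i)
      = ∑ m ∈ Finset.range (k+1), (A (m+2) * G (k - m)) i i :=
    Finset.sum_congr rfl fun m _ => by rw [h (k - m) (Nat.sub_le _ _)]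
  rw [hs]

lemma Fm_zero (n A) : Fm n A 0 = 1 := by rw [Fm]

lemma Fm_succ (n A k) : Fm n A (k+1) = stepO n A (Fm n A) k + stepD n A (Fm n A) k := by
  rw [Fm]
  rw [stepO_congr n A _ (Fm n A) k (fun j hj => by rw [min_eq_left hj]),
      stepD_congr n A _ (Fm n A) k (fun j hj => by rw [min_eq_left hj])]

lemma A0mul_apply {n : ℕ} {A : ℕ → Matrix (Fin n) (Fin n) ℂ} (hdiag : (A 0).IsDiag)
    (M : Matrix (Fin n) (Fin n) ℂ) (i j : Fin n) : (A 0 * M) i j = A 0 i i * M i j := by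
  rw [Matrix.mul_apply]
  exact Finset.sum_eq_single i (fun p _ hp => by rw [hdiag (Ne.symm hp), zero_mul]) (by simp)

lemma mulA0_apply {n : ℕ} {A : ℕ → Matrix (Fin n) (Fin n) ℂ} (hdiag : (A 0).IsDiag)
    (M : Matrix (Fin n) (Fin n) ℂ) (i j : Fin n) : (M * A 0) i j = M i j * A 0 j j := by
  rw [Matrix.mul_apply]
  exact Finset.sum_eq_single j (fun p _ hp => by rw [hdiag hp, mul_zero]) (by simp)

lemma mul_diag_split {n : ℕ} (B M O : Matrix (Fin n) (Fin n) ℂ) (i : Fin n)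
    (hO : O i i = 0) (h : ∀ p, p ≠ i → M p i = O p i) :
    (B * M) i i = B i i * M i i + (B * O) i i := by
  simp only [Matrix.mul_apply]
  have : ∀ p ∈ Finset.univ, B i p * M p i
      = (if p = i then B i i * M i i else 0) + B i p * O p i := by
    intro p _
    by_cases hp : p = i
    · subst hp; simp [hO]
    · simp [hp, h p hp]
  rw [Finset.sum_congr rfl this, Finset.sum_add_distrib, Finset.sum_ite_eq' Finset.univ i]
  simp

lemma key_iff {n : ℕ} {A : ℕ → Matrix (Fin n) (Fin n) ℂ} (hdiag : (A 0).IsDiag)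
    (F : ℕ → Matrix (Fin n) (Fin n) ℂ) (L : Matrix (Fin n) (Fin n) ℂ) (k : ℕ) :
    ((((k+1 : ℕ) : ℤ) - 1) • (if k + 1 = 0 then 0 else F (k + 1 - 1)) =
      (∑ m ∈ Finset.range (k + 1 + 1), A m * F (k + 1 - m))
        - F (k+1) * A 0 - (if k + 1 = 0 then 0 else F (k + 1 - 1)) * L)
    ↔ ∀ i j, (A 0 i i - A 0 j j) * F (k+1) i j =
        (k : ℂ) * F k i j + (F k * L) i j
          - ∑ m ∈ Finset.range (k+1), (A (m+1) * F (k-m)) i j := by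
  rw [if_neg (Nat.succ_ne_zero k), Nat.add_sub_cancel, Finset.sum_range_succ']
  simp only [Nat.succ_sub_succ, Nat.sub_zero]
  rw [← Matrix.ext_iff]
  refine forall_congr' fun i => forall_congr' fun j => ?_
  rw [Matrix.smul_apply, Matrix.sub_apply, Matrix.sub_apply, Matrix.add_apply,
    Matrix.sum_apply, A0mul_apply hdiag, mulA0_apply hdiag]
  rw [zsmul_eq_mul]
  push_cast
  constructor <;> intro h <;> linear_combination -h

/-- The predicate expressing that `(Λ, F) = (p.1, p.2)` is a formal normal form datum for the
formal power series connection `𝒜 = Σ 𝒜_k z^k`: `Λ` is diagonal, `F₀ = 1`, and the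
coefficientwise form of `z²·F′ = 𝒜·F − F·(𝒜₀ + Λ z)` holds (with the convention `F₋₁ = 0`). -/
def IsFormalNormalForm (n : ℕ) (A : ℕ → Matrix (Fin n) (Fin n) ℂ)
    (p : Matrix (Fin n) (Fin n) ℂ × (ℕ → Matrix (Fin n) (Fin n) ℂ)) : Prop :=
  p.1.IsDiag ∧ p.2 0 = 1 ∧
    ∀ k : ℕ,
      ((k : ℤ) - 1) • (if k = 0 then 0 else p.2 (k - 1)) =
        (∑ m ∈ Finset.range (k + 1), A m * p.2 (k - m))
          - p.2 k * A 0 - (if k = 0 then 0 else p.2 (k - 1)) * p.1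

lemma exists_form {n : ℕ} {A : ℕ → Matrix (Fin n) (Fin n) ℂ} (hdiag : (A 0).IsDiag)
    (hdist : Function.Injective fun i : Fin n => A 0 i i) :
    IsFormalNormalForm n A (Matrix.diagonal (fun i => A 1 i i), Fm n A) := by
  refine ⟨Matrix.isDiag_diagonal _, Fm_zero n A, ?_⟩
  intro k
  dsimp only
  cases k with
  | zero =>
    simp [Fm_zero]
  | succ k =>
    rw [key_iff hdiag]
    intro i j
    by_cases hij : i = j
    · subst hij
      rw [sub_self, zero_mul, Matrix.mul_diagonal, Finset.sum_range_succ']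
      have harg : ∀ m : ℕ, m + 1 + 1 = m + 2 := fun m => rfl
      simp only [Nat.sub_zero, Nat.zero_add, harg]
      cases k with
      | zero =>
        simp [Fm_zero, Matrix.mul_one]
      | succ k' =>
        simp only [Nat.succ_sub_succ]
        have hO0 : stepO n A (Fm n A) k' i i = 0 := by simp [stepO]
        have hsplit := mul_diag_split (A 1) (Fm n A (k'+1)) (stepO n A (Fm n A) k') i hO0
          (fun p hp => by
            rw [Fm_succ]
            simp [Matrix.add_apply, stepD, Matrix.diagonal_apply_ne _ hp])
        have hD : ((k' : ℂ) + 1) * Fm n A (k'+1) i i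
            = (A 1 * stepO n A (Fm n A) k') i i
              + ∑ m ∈ Finset.range (k'+1), (A (m+2) * Fm n A (k'-m)) i i := by
          rw [Fm_succ]
          rw [Matrix.add_apply, hO0, zero_add]
          rw [stepD, Matrix.diagonal_apply_eq]
          rw [mul_div_cancel₀]
          exact Nat.cast_add_one_ne_zero k'
        rw [hsplit]
        push_cast
        linear_combination -hD
    · have hne : A 0 i i - A 0 j j ≠ 0 := sub_ne_zero.mpr fun h => hij (hdist h)
      rw [Fm_succ, Matrix.add_apply, stepD, Matrix.diagonal_apply_ne _ hij, add_zero]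
      rw [stepO, Matrix.of_apply, if_neg hij, mul_comm, div_mul_cancel₀ _ hne]
      simp only [Matrix.sub_apply, Matrix.add_apply, Matrix.smul_apply, smul_eq_mul,
        Matrix.sum_apply]

lemma lam_eq {n : ℕ} {A : ℕ → Matrix (Fin n) (Fin n) ℂ} (hdiag : (A 0).IsDiag)
    (p : Matrix (Fin n) (Fin n) ℂ × (ℕ → Matrix (Fin n) (Fin n) ℂ))
    (hp : IsFormalNormalForm n A p) : p.1 = Matrix.diagonal fun i => A 1 i i := by
  obtain ⟨hd, h0, hE⟩ := hp
  have h := (key_iff hdiag p.2 p.1 0).mp (hE 1)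
  ext i j
  by_cases hij : i = j
  · subst hij
    have h1 := h i i
    simp only [Nat.zero_add, Finset.sum_range_one, Nat.sub_zero, h0, Matrix.one_mul, Matrix.mul_one,
      Nat.cast_zero, zero_mul, sub_self, zero_mul] at h1
    rw [Matrix.diagonal_apply_eq]
    linear_combination -h1
  · rw [Matrix.diagonal_apply_ne _ hij]
    exact hd hij

lemma unique_form {n : ℕ} {A : ℕ → Matrix (Fin n) (Fin n) ℂ} (hdiag : (A 0).IsDiag)
    (hdist : Function.Injective fun i : Fin n => A 0 i i)
    (p : Matrix (Fin n) (Fin n) ℂ × (ℕ → Matrix (Fin n) (Fin n) ℂ))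
    (hp : IsFormalNormalForm n A p) :
    p = (Matrix.diagonal fun i => A 1 i i, Fm n A) := by
  have hL : p.1 = Matrix.diagonal fun i => A 1 i i := lam_eq hdiag p hp
  obtain ⟨L, F⟩ := p
  dsimp only at hL
  subst hL
  obtain ⟨hd, h0, hE⟩ := hp
  dsimp only at h0 hE ⊢
  refine Prod.ext rfl (funext fun k => ?_)
  show F k = Fm n A k
  induction k using Nat.strong_induction_on with
  | _ k ih =>
    match k with
    | 0 => rw [h0, Fm_zero]
    | (k+1) =>
      have hkey := (key_iff hdiag F (Matrix.diagonal fun i => A 1 i i) k).mp (hE (k+1))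
      have hFle : ∀ m, m ≤ k → F m = Fm n A m := fun m hm => ih m (Nat.lt_succ_of_le hm)
      have hOff : ∀ i j, i ≠ j → F (k+1) i j = stepO n A (Fm n A) k i j := by
        intro i j hij
        have hne : A 0 i i - A 0 j j ≠ 0 := sub_ne_zero.mpr fun h => hij (hdist h)
        have h1 := hkey i j
        rw [hFle k le_rfl,
          Finset.sum_congr rfl (fun m _ => by rw [hFle _ (Nat.sub_le k m)] :
            ∀ m ∈ Finset.range (k+1), (A (m+1) * F (k-m)) i j
              = (A (m+1) * Fm n A (k-m)) i j)] at h1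
        rw [stepO, Matrix.of_apply, if_neg hij, eq_div_iff hne]
        simp only [Matrix.sub_apply, Matrix.add_apply, Matrix.smul_apply, smul_eq_mul,
          Matrix.sum_apply]
        linear_combination h1
      have hkey2 := (key_iff hdiag F (Matrix.diagonal fun i => A 1 i i) (k+1)).mp (hE (k+2))
      ext i j
      by_cases hij : i = j
      swap
      · rw [hOff i j hij, Fm_succ, Matrix.add_apply, stepD, Matrix.diagonal_apply_ne _ hij,
          add_zero]
      subst hij
      have h2 := hkey2 i i
      rw [sub_self, zero_mul, Matrix.mul_diagonal, Finset.sum_range_succ'] at h2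
      have harg : ∀ m : ℕ, m + 1 + 1 = m + 2 := fun m => rfl
      simp only [Nat.succ_sub_succ, Nat.sub_zero, Nat.zero_add, harg] at h2
      rw [Finset.sum_congr rfl (fun m _ => by rw [hFle _ (Nat.sub_le k m)] :
            ∀ m ∈ Finset.range (k+1), (A (m+2) * F (k-m)) i i
              = (A (m+2) * Fm n A (k-m)) i i)] at h2
      have hO0 : stepO n A (Fm n A) k i i = 0 := by simp [stepO]
      have hsplit := mul_diag_split (A 1) (F (k+1)) (stepO n A (Fm n A) k) i hO0
        (fun p hp => hOff p i hp)
      rw [hsplit] at h2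
      have hD : Fm n A (k+1) i i = ((A 1 * stepO n A (Fm n A) k) i i
          + ∑ m ∈ Finset.range (k+1), (A (m+2) * Fm n A (k-m)) i i) / ((k : ℂ) + 1) := by
        rw [Fm_succ, Matrix.add_apply, hO0, zero_add, stepD, Matrix.diagonal_apply_eq]
      rw [hD, eq_div_iff (Nat.cast_add_one_ne_zero k)]
      push_cast at h2 ⊢
      linear_combination -h2


/-- **Formal classification of irregular singularities** ([bafi, Lemma 2.1] for `GL_n(ℂ)`):
if the leading coefficient `𝒜₀` is diagonal with pairwise distinct entries, then there is a
unique pair `(Λ, F)` with `Λ` diagonal and `F` a formal power series with `F₀ = 1` satisfying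
`z² F′ = 𝒜 F − F(𝒜₀ + Λz)`; moreover `Λ` is the diagonal part of `𝒜₁`. -/
theorem formal_normal_form_exists_unique (n : ℕ) (hn : 1 ≤ n)
    (A : ℕ → Matrix (Fin n) (Fin n) ℂ)
    (hdiag : (A 0).IsDiag)
    (hdist : Function.Injective fun i : Fin n => A 0 i i) :
    (∃! p : Matrix (Fin n) (Fin n) ℂ × (ℕ → Matrix (Fin n) (Fin n) ℂ),
        IsFormalNormalForm n A p) ∧
    (∀ p : Matrix (Fin n) (Fin n) ℂ × (ℕ → Matrix (Fin n) (Fin n) ℂ),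
        IsFormalNormalForm n A p → p.1 = Matrix.diagonal fun i => A 1 i i) := by
  exact ⟨⟨(Matrix.diagonal fun i => A 1 i i, Fm n A), exists_form hdiag hdist,
    fun q hq => unique_form hdiag hdist q hq⟩, fun p hp => lam_eq hdiag p hp⟩
end

section
/- Let n ≥ 1 and let a : Fin n → ℂ satisfy Re(a(i) − a(j)) > 0 whenever i < j (in particular a is injective). Declare two pairs (i,j) and (i′,j′) with i < j and i′ < j′ equivalent if a(i) − a(j) is a positive real multiple of a(i′) − a(j′), and let R₁, …, R_l be the resulting equivalence classes of pairs. For each t, let Sto_t be the set of matrices g ∈ M_n(ℂ) with g_kk = 1 for all k and g_ij = 0 for all i ≠ j with (i,j) ∉ R_t. Then for any enumeration d₁, …, d_l of the classes, the multiplication map Sto_{d₁} × Sto_{d₂} × ⋯ × Sto_{d_l} → U₊, (K₁, …, K_l) ↦ K₁K₂⋯K_l, is a bijection onto the group U₊ of upper-triangular matrices with all diagonal entries equal to 1. -/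
/-!
Index the entries above the diagonal by the pairs `i < j`, graded by the gap `j - i`. For
unitriangular factors, the `(i, j)` entry of a product is the sum of the `(i, j)` entries of the
factors plus terms involving only entries of smaller gap. Since every pair `i < j` lies in exactly
one class (positive proportionality is an equivalence relation), the product map, read in these
coordinates, is the identity plus a map that at each pair depends only on pairs of smaller gap.
Such a map is injective by induction on the gap, and its inverse is built by recursion on the gap.
-/

open Function

theorem WellFounded.bijective_of_sub_local {α R : Type*} [AddCommGroup R] {r : α → α → Prop}
    (hr : WellFounded r) {F : (α → R) → α → R}
    (hF : ∀ x x' a, (∀ b, r b a → x b = x' b) → F x a - x a = F x' a - x' a) :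
    Bijective F := by
  classical
  refine ⟨fun x x' hxx' => funext fun a => ?_, fun y => ?_⟩
  · induction a using hr.induction with
    | _ a ih => simpa [hxx'] using hF x x' a ih
  · let x : α → R := hr.fix fun a rec =>
      let x₀ : α → R := fun b => if h : r b a then rec b h else 0
      y a - (F x₀ a - x₀ a)
    refine ⟨x, funext fun a => ?_⟩
    have hx : x a = y a - (F x a - x a) :=
      (hr.fix_eq _ a).trans (congrArg (y a - ·) (hF _ x a fun b hb => dif_pos hb))
    rw [eq_sub_iff_add_eq, add_sub_cancel] at hx
    exact hx

namespace Matrix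

section UnitUpperTriangular

variable {ι R : Type*} [LinearOrder ι] [Fintype ι] [Semiring R]

variable (ι R) in
def unitUpperTriangular : Submonoid (Matrix ι ι R) where
  carrier := {M | (∀ i, M i i = 1) ∧ M.IsUpperTriangular}
  one_mem' := ⟨fun _ => one_apply_eq _, blockTriangular_one⟩
  mul_mem' {A B} hA hB := by
    refine ⟨fun i => ?_, hA.2.mul hB.2⟩
    rw [mul_apply, Finset.sum_eq_single i (fun k _ hk => ?_) (by simp), hA.1, hB.1, one_mul]
    rcases hk.lt_or_gt with hki | hik
    · rw [hA.2 hki, zero_mul]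
    · rw [hB.2 hik, mul_zero]

theorem ext_of_mem_unitUpperTriangular {A B : Matrix ι ι R} (hA : A ∈ unitUpperTriangular _ _)
    (hB : B ∈ unitUpperTriangular _ _) (h : ∀ i j, i < j → A i j = B i j) : A = B := by
  ext i j
  rcases lt_trichotomy i j with hij | rfl | hji
  · exact h i j hij
  · rw [hA.1, hB.1]
  · rw [hA.2 hji, hB.2 hji]

theorem list_prod_ofFn_mem_unitUpperTriangular {l : ℕ} {K : Fin l → Matrix ι ι R}
    (hK : ∀ t, K t ∈ unitUpperTriangular _ _) :
    (List.ofFn K).prod ∈ unitUpperTriangular _ _ :=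
  list_prod_mem (List.forall_mem_ofFn_iff.2 hK)

end UnitUpperTriangular

variable {R : Type*} [Ring R] {n : ℕ}

theorem mul_apply_sub_mul_apply_of_unitUpperTriangular {A A' B B' : Matrix (Fin n) (Fin n) R}
    (hA : A ∈ unitUpperTriangular _ _) (hA' : A' ∈ unitUpperTriangular _ _)
    (hB : B ∈ unitUpperTriangular _ _) (hB' : B' ∈ unitUpperTriangular _ _) {i j : Fin n}
    (hij : i < j)
    (hAeq : ∀ k, i < k → k < j → A i k = A' i k)
    (hBeq : ∀ k, i < k → k < j → B k j = B' k j) :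
    (A * B) i j - (A' * B') i j = (A i j - A' i j) + (B i j - B' i j) := by
  have hout : ∀ k ∉ ({i, j} : Finset (Fin n)), A i k * B k j - A' i k * B' k j = 0 := by
    intro k hk
    simp only [Finset.mem_insert, Finset.mem_singleton, not_or] at hk
    rcases Ne.lt_or_gt hk.1 with hki | hik
    · rw [hA.2 hki, hA'.2 hki, zero_mul, zero_mul, sub_self]
    rcases Ne.lt_or_gt hk.2 with hkj | hjk
    · rw [hAeq k hik hkj, hBeq k hik hkj, sub_self]
    · rw [hB.2 hjk, hB'.2 hjk, mul_zero, mul_zero, sub_self]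
  rw [mul_apply, mul_apply, ← Finset.sum_sub_distrib,
    ← Finset.sum_subset (Finset.subset_univ _) fun k _ hk => hout k hk,
    Finset.sum_pair hij.ne, hA.1, hA'.1, hB.1, hB'.1, one_mul, one_mul, mul_one, mul_one, add_comm]

theorem list_prod_ofFn_apply_sub_of_unitUpperTriangular {l : ℕ}
    {K K' : Fin l → Matrix (Fin n) (Fin n) R} (hK : ∀ t, K t ∈ unitUpperTriangular _ _)
    (hK' : ∀ t, K' t ∈ unitUpperTriangular _ _) {i j : Fin n} (hij : i < j)
    (heq : ∀ t (i' j' : Fin n), (j' : ℕ) - i' < (j : ℕ) - i → K t i' j' = K' t i' j') :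
    (List.ofFn K).prod i j - (List.ofFn K').prod i j = ∑ t, (K t i j - K' t i j) := by
  induction l generalizing i j with
  | zero => simp
  | succ l ih =>
    have htail : ∀ k, i < k → k < j →
        (List.ofFn fun t => K t.succ).prod k j = (List.ofFn fun t => K' t.succ).prod k j := by
      intro k hik hkj
      have h := ih (fun t => hK t.succ) (fun t => hK' t.succ) hkj
        fun t i' j' h => heq t.succ i' j' (by omega)
      rwa [Finset.sum_eq_zero fun t _ => sub_eq_zero.2 (heq t.succ k j (by omega)),
        sub_eq_zero] at h
    simp only [List.ofFn_succ, List.prod_cons]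
    rw [mul_apply_sub_mul_apply_of_unitUpperTriangular (hK 0) (hK' 0)
      (list_prod_ofFn_mem_unitUpperTriangular fun t => hK t.succ)
      (list_prod_ofFn_mem_unitUpperTriangular fun t => hK' t.succ) hij
      (fun k hik hkj => heq 0 i k (by omega)) htail,
      ih (fun t => hK t.succ) (fun t => hK' t.succ) hij fun t => heq t.succ, Fin.sum_univ_succ]

abbrev UpperPair (n : ℕ) := {p : Fin n × Fin n // p.1 < p.2}

-- For `S = R(d)` this is the Stokes group `Sto_d`; for a general `S` it need not be a group.
def stokesSet (S : Set (Fin n × Fin n)) : Set (Matrix (Fin n) (Fin n) R) :=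
  {g | (∀ i, g i i = 1) ∧ ∀ i j, i ≠ j → (i, j) ∉ S → g i j = 0}

theorem stokesSet_subset_unitUpperTriangular {S : Set (Fin n × Fin n)}
    (hS : S ⊆ {p | p.1 < p.2}) :
    stokesSet S ⊆ (unitUpperTriangular (Fin n) R : Set (Matrix (Fin n) (Fin n) R)) :=
  fun _ hg => ⟨hg.1, fun _ _ hji => hg.2 _ _ hji.ne' fun h => (hS h).not_gt hji⟩

variable {l : ℕ} {D : Fin l → Set (Fin n × Fin n)}

theorem sum_apply_of_mem_stokesSet (hD : Pairwise (Disjoint on D))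
    {K : Fin l → Matrix (Fin n) (Fin n) R}
    (hK : ∀ t, K t ∈ stokesSet (D t)) {t : Fin l} {i j : Fin n} (hij : i ≠ j)
    (ht : (i, j) ∈ D t) : ∑ s, K s i j = K t i j :=
  Finset.sum_eq_single t
    (fun s _ hst => (hK s).2 i j hij fun hs => Set.disjoint_left.1 (hD hst) hs ht) (by simp)

open Classical in
noncomputable def stokesFactors (D : Fin l → Set (Fin n × Fin n)) (x : UpperPair n → R)
    (t : Fin l) : Matrix (Fin n) (Fin n) R :=
  of fun i j => if i = j then 1 else if h : i < j ∧ (i, j) ∈ D t then x ⟨(i, j), h.1⟩ else 0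

theorem stokesFactors_mem_stokesSet (x : UpperPair n → R) (t : Fin l) :
    stokesFactors D x t ∈ stokesSet (D t) :=
  ⟨fun i => if_pos rfl, fun i j hij hijD => by simp [stokesFactors, hij, hijD]⟩

theorem eq_stokesFactors_sum (hD : Pairwise (Disjoint on D))
    (hsub : ∀ t, D t ⊆ {p | p.1 < p.2}) {K : Fin l → Matrix (Fin n) (Fin n) R}
    (hK : ∀ t, K t ∈ stokesSet (D t)) :
    K = stokesFactors D fun p => ∑ t, K t p.1.1 p.1.2 := by
  funext t
  ext i j
  by_cases hij : i = j
  · subst hij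
    simp [stokesFactors, (hK t).1]
  by_cases ht : (i, j) ∈ D t
  · have hlt : i < j := hsub t ht
    simp [stokesFactors, hij, hlt, ht, sum_apply_of_mem_stokesSet hD hK hij ht]
  · simp [stokesFactors, hij, ht, (hK t).2 i j hij ht]

theorem sum_stokesFactors_apply (hD : Pairwise (Disjoint on D))
    (hcover : ⋃ t, D t = {p | p.1 < p.2}) (x : UpperPair n → R) (p : UpperPair n) :
    ∑ t, stokesFactors D x t p.1.1 p.1.2 = x p := by
  obtain ⟨t, ht⟩ := Set.mem_iUnion.1 (hcover ▸ p.2 : p.1 ∈ ⋃ t, D t)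
  rw [sum_apply_of_mem_stokesSet hD (stokesFactors_mem_stokesSet x) p.2.ne ht]
  simp [stokesFactors, p.2.ne, p.2, ht]

theorem bijective_list_prod_stokesFactors (hD : Pairwise (Disjoint on D))
    (hcover : ⋃ t, D t = {p | p.1 < p.2}) :
    Bijective fun (x : UpperPair n → R) (p : UpperPair n) =>
      (List.ofFn (stokesFactors D x)).prod p.1.1 p.1.2 := by
  have hmem x t : stokesFactors D x t ∈ unitUpperTriangular (Fin n) R :=
    stokesSet_subset_unitUpperTriangular (hcover ▸ Set.subset_iUnion D t)
      (stokesFactors_mem_stokesSet x t)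
  refine (measure fun p : UpperPair n => (p.1.2 : ℕ) - p.1.1).wf
    |>.bijective_of_sub_local fun x x' p hxx' => ?_
  rw [sub_eq_sub_iff_sub_eq_sub, list_prod_ofFn_apply_sub_of_unitUpperTriangular (hmem x)
    (hmem x') p.2, Finset.sum_sub_distrib, sum_stokesFactors_apply hD hcover,
    sum_stokesFactors_apply hD hcover]
  intro t i j hlt
  simp only [stokesFactors, of_apply]
  split_ifs with hij hijD
  · rfl
  · rw [hxx' ⟨(i, j), hijD.1⟩ hlt]
  · rfl

theorem bijOn_list_prod_stokesSet (hD : Pairwise (Disjoint on D))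
    (hcover : ⋃ t, D t = {p | p.1 < p.2}) :
    Set.BijOn (fun K : Fin l → Matrix (Fin n) (Fin n) R => (List.ofFn K).prod)
      {K | ∀ t, K t ∈ stokesSet (D t)} (unitUpperTriangular (Fin n) R) := by
  have hsub t : D t ⊆ {p | p.1 < p.2} := hcover ▸ Set.subset_iUnion D t
  have hmem {K : Fin l → Matrix (Fin n) (Fin n) R} (hK : ∀ t, K t ∈ stokesSet (D t)) :
      (List.ofFn K).prod ∈ unitUpperTriangular (Fin n) R :=
    list_prod_ofFn_mem_unitUpperTriangular fun t =>
      stokesSet_subset_unitUpperTriangular (hsub t) (hK t)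
  have hF := bijective_list_prod_stokesFactors (R := R) hD hcover
  refine ⟨fun K hK => hmem hK, fun K hK K' hK' hKK' => ?_, fun u hu => ?_⟩
  · rw [eq_stokesFactors_sum hD hsub hK, eq_stokesFactors_sum hD hsub hK'] at hKK' ⊢
    exact congrArg _ (hF.1 (funext fun p => congrFun (congrFun hKK' p.1.1) p.1.2))
  · obtain ⟨x, hx⟩ := hF.2 fun p => u p.1.1 p.1.2
    have hK := stokesFactors_mem_stokesSet (D := D) x
    exact ⟨_, hK, ext_of_mem_unitUpperTriangular (hmem hK) hu fun i j hij =>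
      congrFun hx ⟨(i, j), hij⟩⟩

end Matrix

def rayClass {β : Type*} (P : β → Prop) (v : β → ℂ) (p : β) : Set β :=
  {q | P q ∧ ∃ r : ℝ, 0 < r ∧ v q = r * v p}

theorem rayClass_eq_of_mem {β : Type*} {P : β → Prop} {v : β → ℂ} {p q : β}
    (h : q ∈ rayClass P v p) : rayClass P v q = rayClass P v p := by
  obtain ⟨-, c, hc, hq⟩ := h
  have hc₀ : (c : ℂ) ≠ 0 := by exact_mod_cast hc.ne'
  ext z
  refine and_congr_right fun _ => ⟨fun ⟨r, hr, hz⟩ => ⟨r * c, mul_pos hr hc, ?_⟩,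
    fun ⟨r, hr, hz⟩ => ⟨r / c, div_pos hr hc, ?_⟩⟩
  · rw [hz, hq]; push_cast; ring
  · rw [hz, hq]; push_cast; field_simp

theorem pairwise_disjoint_of_forall_eq_rayClass {ι β : Type*} {P : β → Prop} {v : β → ℂ}
    {D : ι → Set β} (hD : ∀ t, ∃ p, D t = rayClass P v p) (hinj : Injective D) :
    Pairwise (Disjoint on D) := by
  intro t s hts
  obtain ⟨p, hp⟩ := hD t
  obtain ⟨p', hp'⟩ := hD s
  refine Set.disjoint_left.2 fun q hqt hqs => hts (hinj ?_)
  rw [hp] at hqt ⊢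
  rw [hp'] at hqs ⊢
  rw [← rayClass_eq_of_mem hqt, rayClass_eq_of_mem hqs]

theorem stokes_factorisation_general (n l : ℕ) (a : Fin n → ℂ)
    (D : Fin l → Set (Fin n × Fin n))
    (hclass : ∀ t : Fin l, ∃ p : Fin n × Fin n, p.1 < p.2 ∧
      D t = {q : Fin n × Fin n | q.1 < q.2 ∧
        ∃ r : ℝ, 0 < r ∧ a q.1 - a q.2 = (r : ℂ) * (a p.1 - a p.2)})
    (hinj : Function.Injective D)
    (hcover : (⋃ t : Fin l, D t) = {p : Fin n × Fin n | p.1 < p.2}) :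
    Set.BijOn
      (fun K : Fin l → Matrix (Fin n) (Fin n) ℂ => (List.ofFn K).prod)
      {K : Fin l → Matrix (Fin n) (Fin n) ℂ |
        ∀ t : Fin l, (∀ i, K t i i = 1) ∧
          ∀ i j : Fin n, i ≠ j → (i, j) ∉ D t → K t i j = 0}
      {u : Matrix (Fin n) (Fin n) ℂ |
        (∀ i, u i i = 1) ∧ ∀ i j : Fin n, j < i → u i j = 0} :=
  have hD : Pairwise (Disjoint on D) := pairwise_disjoint_of_forall_eq_rayClass
    (v := fun q => a q.1 - a q.2) (fun t => (hclass t).imp fun _ hp => hp.2) hinj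
  Matrix.bijOn_list_prod_stokesSet hD hcover

/-- **Stokes factorisation** ([bafi, Lemma 2.4] for `GL_n(ℂ)`): if the singular directions
determined by a regular element `A₀ = diag(a)` all lie in the right half-plane, then for any
enumeration `D : Fin l → Set (Fin n × Fin n)` of the equivalence classes of pairs `(i,j)`,
`i < j` (two pairs being equivalent when the corresponding differences `a i − a j` are
positive real multiples of each other), the ordered product map from the product of the
Stokes groups is a bijection onto the group `U₊` of upper-triangular unipotent matrices. -/
theorem stokes_factorisation (n l : ℕ) (hn : 1 ≤ n) (a : Fin n → ℂ)
    (ha : ∀ i j : Fin n, i < j → 0 < (a i - a j).re)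
    (D : Fin l → Set (Fin n × Fin n))
    (hclass : ∀ t : Fin l, ∃ p : Fin n × Fin n, p.1 < p.2 ∧
      D t = {q : Fin n × Fin n | q.1 < q.2 ∧
        ∃ r : ℝ, 0 < r ∧ a q.1 - a q.2 = (r : ℂ) * (a p.1 - a p.2)})
    (hinj : Function.Injective D)
    (hcover : (⋃ t : Fin l, D t) = {p : Fin n × Fin n | p.1 < p.2}) :
    Set.BijOn
      (fun K : Fin l → Matrix (Fin n) (Fin n) ℂ => (List.ofFn K).prod)
      {K : Fin l → Matrix (Fin n) (Fin n) ℂ |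
        ∀ t : Fin l, (∀ i, K t i i = 1) ∧
          ∀ i j : Fin n, i ≠ j → (i, j) ∉ D t → K t i j = 0}
      {u : Matrix (Fin n) (Fin n) ℂ |
        (∀ i, u i i = 1) ∧ ∀ i j : Fin n, j < i → u i j = 0} :=
  stokes_factorisation_general n l a D hclass hinj hcover
end
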